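/- Assume â < 0 and 0 < Q̂ < â², and let η, η_f ∈ ℝ. Let T̂ = ln(c_2/c_1)/(2√Δ̂) (the unique positive zero of Φ_{22}(·, 0)) and let x̂_0 ∈ ℝ be the unique solution of Φ_{21}(T̂, 0) x̂_0 + ∫_0^{T̂} Φ_{22}(T̂, τ) Q η dτ = −Λ_{1∞} η_f. Then for every choice of initial value s_0 ∈ ℝ, the solution (X̄, s) on [0, T̂] of the linear system dX̄/dt = (A − Λ_{1∞} + G) X̄ − s, ṡ = −(A − Λ_{1∞}) s − Λ_{1∞} G X̄ + Q(Γ X̄ + η), with X̄(0) = x̂_0 and s(0) = s_0, satisfies the terminal condition s(T̂) = −Λ_{1∞} η_f. Consequently the two-point boundary value problem dX̄/dt = (A − Λ_{1∞} + G) X̄ − s, ṡ = −(A − Λ_{1∞}) s − Λ_{1∞} G X̄ + Q(Γ X̄ + η), X̄(0) = x̂_0, s(T̂) = −Λ_{1∞} η_f, has infinitely many solutions. -/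

import Mathlib

/-- `Λ_{1∞} = A + √(A² + Q)`. -/
noncomputable def lam1Inf (A Q : ℝ) : ℝ := A + Real.sqrt (A ^ 2 + Q)

/-- `â = √(A² + Q) − G/2`. -/
noncomputable def aHat (A Q G : ℝ) : ℝ := Real.sqrt (A ^ 2 + Q) - G / 2

/-- `Q̂ = QΓ − (A + √(A² + Q)) G`. -/
noncomputable def qHat (A Q G Γ : ℝ) : ℝ := Q * Γ - (A + Real.sqrt (A ^ 2 + Q)) * G

/-- `Δ̂ = â² − Q̂`. -/
noncomputable def deltaHat (A Q G Γ : ℝ) : ℝ := (aHat A Q G) ^ 2 - qHat A Q G Γ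

/-- `c₁ = −â − √Δ̂`. -/
noncomputable def cOne (A Q G Γ : ℝ) : ℝ :=
  -aHat A Q G - Real.sqrt (deltaHat A Q G Γ)

/-- `c₂ = −â + √Δ̂`. -/
noncomputable def cTwo (A Q G Γ : ℝ) : ℝ :=
  -aHat A Q G + Real.sqrt (deltaHat A Q G Γ)

/-- `λ₁ = G/2 + √Δ̂`. -/
noncomputable def lamOne (A Q G Γ : ℝ) : ℝ := G / 2 + Real.sqrt (deltaHat A Q G Γ)

/-- `λ₂ = G/2 − √Δ̂`. -/
noncomputable def lamTwo (A Q G Γ : ℝ) : ℝ := G / 2 - Real.sqrt (deltaHat A Q G Γ)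

/-- `Φ₂₁(t,τ) = c₁c₂ (e^{λ₁(t−τ)} − e^{λ₂(t−τ)}) / (2√Δ̂)`. -/
noncomputable def phi21 (A Q G Γ t τ : ℝ) : ℝ :=
  cOne A Q G Γ * cTwo A Q G Γ *
    (Real.exp (lamOne A Q G Γ * (t - τ)) - Real.exp (lamTwo A Q G Γ * (t - τ)))
    / (2 * Real.sqrt (deltaHat A Q G Γ))

/-- `Φ₂₂(t,τ) = (c₂ e^{λ₂(t−τ)} − c₁ e^{λ₁(t−τ)}) / (2√Δ̂)`. -/
noncomputable def phi22 (A Q G Γ t τ : ℝ) : ℝ :=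
  (cTwo A Q G Γ * Real.exp (lamTwo A Q G Γ * (t - τ))
      - cOne A Q G Γ * Real.exp (lamOne A Q G Γ * (t - τ)))
    / (2 * Real.sqrt (deltaHat A Q G Γ))

/-- `T̂ = ln(c₂/c₁) / (2√Δ̂)`. -/
noncomputable def tHat (A Q G Γ : ℝ) : ℝ :=
  Real.log (cTwo A Q G Γ / cOne A Q G Γ) / (2 * Real.sqrt (deltaHat A Q G Γ))

/-- `(X̄, s)` satisfies the linear ODE system
`dX̄/dt = (A − Λ_{1∞} + G) X̄ − s`,
`ṡ = −(A − Λ_{1∞}) s − Λ_{1∞} G X̄ + Q(Γ X̄ + η)` on `[0, Th]`. -/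
def IsLinSysOn (A Q G Γ η Th : ℝ) (X s : ℝ → ℝ) : Prop :=
  (∀ t ∈ Set.Icc (0:ℝ) Th,
    HasDerivWithinAt X ((A - lam1Inf A Q + G) * X t - s t) (Set.Icc (0:ℝ) Th) t) ∧
  (∀ t ∈ Set.Icc (0:ℝ) Th,
    HasDerivWithinAt s
      (-((A - lam1Inf A Q) * s t) - lam1Inf A Q * G * X t + Q * (Γ * X t + η))
      (Set.Icc (0:ℝ) Th) t)

/-!
With `â`, `Q̂` as above the system reads `X̄' = (G/2 - â) X̄ - s`, `s' = Q̂ X̄ + (G/2 + â) s + Qη`.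
For fixed `T`, the row `τ ↦ (Φ₂₁(T,τ), Φ₂₂(T,τ))` solves the adjoint equation `p' = -p 𝔸_∞` with
value `(0, 1)` at `τ = T`, so pairing it with a solution gives the variation-of-constants formula
`s(T) = Φ₂₁(T,0) X̄(0) + Φ₂₂(T,0) s(0) + ∫₀ᵀ Φ₂₂(T,τ) Qη dτ`. At `T = T̂` the coefficient
`Φ₂₂(T̂,0)` of `s(0)` vanishes, so the choice of `x̂₀` forces `s(T̂) = -Λ_{1∞} η_f` whatever `s(0)` is,
while solutions with arbitrary `(X̄(0), s(0))` exist (via the matrix exponential).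
-/

open NormedSpace in
theorem exists_hasDerivAt_eq_clm_add_const {E : Type*} [NormedAddCommGroup E] [NormedSpace ℝ E]
    [CompleteSpace E] (L : E →L[ℝ] E) (b v₀ : E) :
    ∃ v : ℝ → E, v 0 = v₀ ∧ ∀ t, HasDerivAt v (L (v t) + b) t := by
  -- `exp` is built from the rational power series, so it needs the `ℚ`-algebra structure.
  let : NormedAlgebra ℚ (E →L[ℝ] E) := .restrictScalars ℚ ℝ _
  have hcont : Continuous fun τ : ℝ => exp (-τ • L) b := by fun_prop
  refine ⟨fun t => exp (t • L) (v₀ + ∫ τ in (0 : ℝ)..t, exp (-τ • L) b), by simp, fun t => ?_⟩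
  have hexp := hasDerivAt_exp_smul_const' (𝕂 := ℝ) L t
  have hint := (hcont.integral_hasStrictDerivAt 0 t).hasDerivAt.const_add v₀
  convert hexp.clm_apply hint using 1
  have hinv : exp (t • L) * exp (-t • L) = 1 := by
    rw [← exp_add_of_commute ((Commute.refl L).smul_left _ |>.smul_right _), ← add_smul,
      add_neg_cancel, zero_smul, exp_zero]
  rw [← mul_apply_eq_comp (exp (t • L)), hinv, one_apply_eq_self]
  rfl

theorem exists_hasDerivAt_linear_system (m₁₁ m₁₂ m₂₁ m₂₂ b₁ b₂ x₀ y₀ : ℝ) :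
    ∃ x y : ℝ → ℝ, x 0 = x₀ ∧ y 0 = y₀ ∧ ∀ t,
      HasDerivAt x (m₁₁ * x t + m₁₂ * y t + b₁) t ∧
      HasDerivAt y (m₂₁ * x t + m₂₂ * y t + b₂) t := by
  let fst := ContinuousLinearMap.fst ℝ ℝ ℝ
  let snd := ContinuousLinearMap.snd ℝ ℝ ℝ
  obtain ⟨v, hv₀, hv⟩ := exists_hasDerivAt_eq_clm_add_const
    ((m₁₁ • fst + m₁₂ • snd).prod (m₂₁ • fst + m₂₂ • snd)) (b₁, b₂) (x₀, y₀)
  exact ⟨fun t => (v t).1, fun t => (v t).2, by simp [hv₀], by simp [hv₀],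
    fun t => ⟨(hv t).fst, (hv t).snd⟩⟩

theorem hasDerivWithinAt_adjoint_pairing {p q x y : ℝ → ℝ} {S : Set ℝ}
    {t m₁₁ m₁₂ m₂₁ m₂₂ b₁ b₂ : ℝ}
    (hp : HasDerivWithinAt p (-(p t * m₁₁ + q t * m₂₁)) S t)
    (hq : HasDerivWithinAt q (-(p t * m₁₂ + q t * m₂₂)) S t)
    (hx : HasDerivWithinAt x (m₁₁ * x t + m₁₂ * y t + b₁) S t)
    (hy : HasDerivWithinAt y (m₂₁ * x t + m₂₂ * y t + b₂) S t) :
    HasDerivWithinAt (fun u => p u * x u + q u * y u) (p t * b₁ + q t * b₂) S t :=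
  ((hp.mul hx).add (hq.mul hy)).congr_deriv (by ring)

section Fundamental

variable {A Q G Γ : ℝ}

theorem qHat_eq_cOne_mul_cTwo (hΔ : 0 ≤ deltaHat A Q G Γ) :
    qHat A Q G Γ = cOne A Q G Γ * cTwo A Q G Γ := by
  have hsq := Real.sq_sqrt hΔ
  unfold deltaHat at hsq
  unfold cOne cTwo deltaHat
  linear_combination hsq

theorem hasDerivAt_exp_mul_sub (l T t : ℝ) :
    HasDerivAt (fun τ => Real.exp (l * (T - τ))) (-(l * Real.exp (l * (T - t)))) t := by
  have h := (((hasDerivAt_id t).const_sub T).const_mul l).exp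
  exact h.congr_deriv (by simp only [id_eq]; ring)

theorem phi21_hasDerivAt (hΔ : 0 < deltaHat A Q G Γ) (T t : ℝ) :
    HasDerivAt (phi21 A Q G Γ T)
      (-(phi21 A Q G Γ T t * (G / 2 - aHat A Q G) + phi22 A Q G Γ T t * qHat A Q G Γ)) t := by
  have hd : Real.sqrt (deltaHat A Q G Γ) ≠ 0 := (Real.sqrt_pos.2 hΔ).ne'
  have h := (((hasDerivAt_exp_mul_sub (lamOne A Q G Γ) T t).sub
    (hasDerivAt_exp_mul_sub (lamTwo A Q G Γ) T t)).const_mul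
    (cOne A Q G Γ * cTwo A Q G Γ)).div_const (2 * Real.sqrt (deltaHat A Q G Γ))
  refine h.congr_deriv ?_
  rw [qHat_eq_cOne_mul_cTwo hΔ.le]
  unfold phi21 phi22 cOne cTwo lamOne lamTwo
  field_simp
  ring

theorem phi22_hasDerivAt (hΔ : 0 < deltaHat A Q G Γ) (T t : ℝ) :
    HasDerivAt (phi22 A Q G Γ T)
      (-(phi21 A Q G Γ T t * (-1) + phi22 A Q G Γ T t * (G / 2 + aHat A Q G))) t := by
  have hd : Real.sqrt (deltaHat A Q G Γ) ≠ 0 := (Real.sqrt_pos.2 hΔ).ne'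
  have h := (((hasDerivAt_exp_mul_sub (lamTwo A Q G Γ) T t).const_mul (cTwo A Q G Γ)).sub
    ((hasDerivAt_exp_mul_sub (lamOne A Q G Γ) T t).const_mul (cOne A Q G Γ))).div_const
    (2 * Real.sqrt (deltaHat A Q G Γ))
  refine h.congr_deriv ?_
  unfold phi21 phi22 cOne cTwo lamOne lamTwo
  field_simp
  ring

theorem phi21_self (T : ℝ) : phi21 A Q G Γ T T = 0 := by
  simp [phi21]

theorem phi22_self (hΔ : 0 < deltaHat A Q G Γ) (T : ℝ) : phi22 A Q G Γ T T = 1 := by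
  have hd : Real.sqrt (deltaHat A Q G Γ) ≠ 0 := (Real.sqrt_pos.2 hΔ).ne'
  unfold phi22 cOne cTwo
  simp only [sub_self, mul_zero, Real.exp_zero, mul_one]
  field_simp
  ring

theorem cOne_pos (ha : aHat A Q G < 0) (hq : 0 < qHat A Q G Γ) : 0 < cOne A Q G Γ := by
  have hd : Real.sqrt (deltaHat A Q G Γ) < -aHat A Q G :=
    (Real.sqrt_lt' (neg_pos.2 ha)).2 (by unfold deltaHat; linarith)
  unfold cOne
  linarith

theorem cOne_le_cTwo : cOne A Q G Γ ≤ cTwo A Q G Γ := by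
  unfold cOne cTwo
  linarith [Real.sqrt_nonneg (deltaHat A Q G Γ)]

theorem tHat_nonneg (hc₁ : 0 < cOne A Q G Γ) : 0 ≤ tHat A Q G Γ :=
  div_nonneg (Real.log_nonneg ((one_le_div hc₁).2 cOne_le_cTwo)) (by positivity)

theorem phi22_tHat_zero (hΔ : 0 < deltaHat A Q G Γ) (hc₁ : 0 < cOne A Q G Γ) :
    phi22 A Q G Γ (tHat A Q G Γ) 0 = 0 := by
  have hd : Real.sqrt (deltaHat A Q G Γ) ≠ 0 := (Real.sqrt_pos.2 hΔ).ne'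
  have hc₂ : 0 < cTwo A Q G Γ := hc₁.trans_le cOne_le_cTwo
  have hexp : Real.exp (lamOne A Q G Γ * (tHat A Q G Γ - 0))
      = Real.exp (lamTwo A Q G Γ * (tHat A Q G Γ - 0)) * (cTwo A Q G Γ / cOne A Q G Γ) := by
    rw [← Real.exp_log (div_pos hc₂ hc₁), ← Real.exp_add]
    congr 1
    unfold lamOne lamTwo tHat
    field_simp
    ring
  unfold phi22
  rw [hexp]
  field_simp
  ring

end Fundamental

section LinearSystem

variable {A Q G Γ η T : ℝ} {X s : ℝ → ℝ}

theorem isLinSysOn_iff :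
    IsLinSysOn A Q G Γ η T X s ↔
      (∀ t ∈ Set.Icc 0 T, HasDerivWithinAt X
        ((G / 2 - aHat A Q G) * X t + (-1) * s t + 0) (Set.Icc 0 T) t) ∧
      (∀ t ∈ Set.Icc 0 T, HasDerivWithinAt s
        (qHat A Q G Γ * X t + (G / 2 + aHat A Q G) * s t + Q * η) (Set.Icc 0 T) t) := by
  unfold IsLinSysOn
  refine and_congr (forall₂_congr fun t _ => ?_) (forall₂_congr fun t _ => ?_) <;>
    congr! 1 <;> simp only [lam1Inf, aHat, qHat] <;> ring

theorem IsLinSysOn.s_eq_variation_of_constants (h : IsLinSysOn A Q G Γ η T X s)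
    (hΔ : 0 < deltaHat A Q G Γ) (hT : 0 ≤ T) :
    s T = phi21 A Q G Γ T 0 * X 0 + phi22 A Q G Γ T 0 * s 0
      + ∫ τ in (0 : ℝ)..T, phi22 A Q G Γ T τ * (Q * η) := by
  obtain ⟨hX, hs⟩ := isLinSysOn_iff.1 h
  have hF : ∀ t ∈ Set.Icc 0 T,
      HasDerivWithinAt (fun u => phi21 A Q G Γ T u * X u + phi22 A Q G Γ T u * s u)
        (phi21 A Q G Γ T t * 0 + phi22 A Q G Γ T t * (Q * η)) (Set.Icc 0 T) t :=
    fun t ht => hasDerivWithinAt_adjoint_pairing (phi21_hasDerivAt hΔ T t).hasDerivWithinAt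
      (phi22_hasDerivAt hΔ T t).hasDerivWithinAt (hX t ht) (hs t ht)
  have hcont₂₁ : Continuous (phi21 A Q G Γ T) :=
    continuous_iff_continuousAt.2 fun t => (phi21_hasDerivAt hΔ T t).continuousAt
  have hcont₂₂ : Continuous (phi22 A Q G Γ T) :=
    continuous_iff_continuousAt.2 fun t => (phi22_hasDerivAt hΔ T t).continuousAt
  have hftc := intervalIntegral.integral_eq_sub_of_hasDerivAt_of_le hT
    (fun t ht => (hF t ht).continuousWithinAt)
    (fun t ht => (hF t (Set.Ioo_subset_Icc_self ht)).hasDerivAt (Icc_mem_nhds ht.1 ht.2))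
    (Continuous.intervalIntegrable (by fun_prop) 0 T)
  simp only [mul_zero, zero_add, phi21_self, phi22_self hΔ] at hftc
  linarith

end LinearSystem

theorem exists_isLinSysOn (A Q G Γ η T x₀ s₀ : ℝ) :
    ∃ X s : ℝ → ℝ, IsLinSysOn A Q G Γ η T X s ∧ X 0 = x₀ ∧ s 0 = s₀ := by
  obtain ⟨X, s, hX₀, hs₀, hderiv⟩ := exists_hasDerivAt_linear_system
    (G / 2 - aHat A Q G) (-1) (qHat A Q G Γ) (G / 2 + aHat A Q G) 0 (Q * η) x₀ s₀
  exact ⟨X, s, isLinSysOn_iff.2 ⟨fun t _ => (hderiv t).1.hasDerivWithinAt,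
    fun t _ => (hderiv t).2.hasDerivWithinAt⟩, hX₀, hs₀⟩

theorem tpbv_infinitely_many_solutions_general
    (A G Q Γ η ηf x0hat : ℝ)
    (ha : aHat A Q G < 0)
    (hq1 : 0 < qHat A Q G Γ) (hq2 : qHat A Q G Γ < (aHat A Q G) ^ 2)
    (hx0 : phi21 A Q G Γ (tHat A Q G Γ) 0 * x0hat
        + (∫ τ in (0:ℝ)..(tHat A Q G Γ), phi22 A Q G Γ (tHat A Q G Γ) τ * (Q * η))
      = -(lam1Inf A Q) * ηf) :
    (∀ X s : ℝ → ℝ,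
      IsLinSysOn A Q G Γ η (tHat A Q G Γ) X s → X 0 = x0hat →
        s (tHat A Q G Γ) = -(lam1Inf A Q) * ηf) ∧
    (∀ s0 : ℝ, ∃ X s : ℝ → ℝ,
      IsLinSysOn A Q G Γ η (tHat A Q G Γ) X s ∧ X 0 = x0hat ∧ s 0 = s0 ∧
      s (tHat A Q G Γ) = -(lam1Inf A Q) * ηf) := by
  have hΔ : 0 < deltaHat A Q G Γ := sub_pos.2 hq2
  have hc₁ : 0 < cOne A Q G Γ := cOne_pos ha hq1
  have terminal : ∀ X s : ℝ → ℝ, IsLinSysOn A Q G Γ η (tHat A Q G Γ) X s → X 0 = x0hat →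
      s (tHat A Q G Γ) = -(lam1Inf A Q) * ηf := by
    intro X s hsys hX₀
    rw [hsys.s_eq_variation_of_constants hΔ (tHat_nonneg hc₁), phi22_tHat_zero hΔ hc₁, hX₀,
      ← hx0]
    ring
  refine ⟨terminal, fun s₀ => ?_⟩
  obtain ⟨X, s, hsys, hX₀, hs₀⟩ := exists_isLinSysOn A Q G Γ η (tHat A Q G Γ) x0hat s₀
  exact ⟨X, s, hsys, hX₀, hs₀, terminal X s hsys hX₀⟩

/-- Assume `â < 0`, `0 < Q̂ < â²`, let `T̂ = ln(c₂/c₁)/(2√Δ̂)` and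
let `x̂₀` solve `Φ₂₁(T̂,0) x̂₀ + ∫₀^{T̂} Φ₂₂(T̂,τ) Q η dτ = −Λ_{1∞} η_f`.  Then every
solution of the linear system on `[0,T̂]` with `X̄(0) = x̂₀` (any initial value `s(0)`)
satisfies the terminal condition `s(T̂) = −Λ_{1∞} η_f`; consequently, for every
`s₀ ∈ ℝ` the TPBV problem `X̄(0) = x̂₀`, `s(T̂) = −Λ_{1∞} η_f` has a solution with
`s(0) = s₀`, hence it has infinitely many solutions. -/
theorem tpbv_infinitely_many_solutions
    (A G Q Γ η ηf x0hat : ℝ) (hQ : 0 ≤ Q)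
    (ha : aHat A Q G < 0)
    (hq1 : 0 < qHat A Q G Γ) (hq2 : qHat A Q G Γ < (aHat A Q G) ^ 2)
    (hx0 : phi21 A Q G Γ (tHat A Q G Γ) 0 * x0hat
        + (∫ τ in (0:ℝ)..(tHat A Q G Γ), phi22 A Q G Γ (tHat A Q G Γ) τ * (Q * η))
      = -(lam1Inf A Q) * ηf) :
    (∀ X s : ℝ → ℝ,
      IsLinSysOn A Q G Γ η (tHat A Q G Γ) X s → X 0 = x0hat →
        s (tHat A Q G Γ) = -(lam1Inf A Q) * ηf) ∧
    (∀ s0 : ℝ, ∃ X s : ℝ → ℝ,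
      IsLinSysOn A Q G Γ η (tHat A Q G Γ) X s ∧ X 0 = x0hat ∧ s 0 = s0 ∧
      s (tHat A Q G Γ) = -(lam1Inf A Q) * ηf) :=
  tpbv_infinitely_many_solutions_general A G Q Γ η ηf x0hat ha hq1 hq2 hx0
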